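/- arXiv:2605.29671 — 4 statements merged into one kernel-verified Lean document; each statement's English description precedes it below -/
import Mathlib

section
/- Let (μ_k)_{k∈ℕ} be a sequence of pairwise distinct points of (0,1) and let b = (b_k) ∈ ℓ². For each real λ ≥ 0 let D^λ b denote the sequence (μ_k^λ b_k)_{k∈ℕ} ∈ ℓ². Assume that the orbit (D^ℓ b)_{ℓ∈ℕ} is a frame for ℓ². Then for any sequence Λ = (λ_n)_{n∈ℕ} of non-negative real numbers, the family (D^{λ_n} b)_{n∈ℕ} is a frame for ℓ² if and only if the family of functions (t ↦ t^{λ_n})_{n∈ℕ} is a frame for L²(ν), where ν = ∑_{k≥0} (1 − μ_k²) δ_{μ_k} is the discrete measure on [0,1) with δ_x the Dirac measure at x. -/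
/-!
Testing the frame inequalities of the orbit `(D^ℓ b)` on the basis vector `e_k` gives
`A₀ ≤ ∑_ℓ μ_k^{2ℓ} |b_k|² = |b_k|² / (1 - μ_k²) ≤ B₀`, so `|b_k|² ≍ 1 - μ_k²` uniformly in `k`.
Hence `y ↦ f` with `f(μ_k) = conj(y_k) b_k / (1 - μ_k²)` identifies `ℓ²` with `L²(ν)` (up to
`ν`-null sets), carries `⟪y, D^λ b⟫` to `∫ f(t) t^λ dν`, and distorts `‖·‖²` by a factor in
`[A₀, B₀]`; frame inequalities therefore transfer in both directions.
-/

open MeasureTheory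

noncomputable section

/-- `ℓ²`: square-summable complex sequences. -/
abbrev ell2 : Type := lp (fun _ : ℕ => ℂ) 2

/-- A family `(x i)` in a complex Hilbert space is a frame. -/
def IsFrame {H : Type*} [NormedAddCommGroup H] [InnerProductSpace ℂ H] {ι : Type*}
    (x : ι → H) : Prop :=
  ∃ A B : ℝ, 0 < A ∧ A ≤ B ∧ ∀ y : H,
    A * ‖y‖ ^ 2 ≤ ∑' i, ‖(inner ℂ y (x i) : ℂ)‖ ^ 2 ∧
    ∑' i, ‖(inner ℂ y (x i) : ℂ)‖ ^ 2 ≤ B * ‖y‖ ^ 2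

/-- The discrete measure `ν = ∑ₖ (1 − μₖ²) δ_{μₖ}` on `[0,1) ⊆ ℝ`. -/
def discMeasure (μ : ℕ → ℝ) : Measure ℝ :=
  Measure.sum fun k => ENNReal.ofReal (1 - μ k ^ 2) • Measure.dirac (μ k)

/-- The family of power functions `t ↦ t^{Λ n}` is a frame for `L²(ν)`:
`A‖f‖² ≤ ∑ₙ |⟨f, t^{Λ n}⟩_{L²(ν)}|² ≤ B‖f‖²` for every `f ∈ L²(ν)`. -/
def IsPowerFrameL2 (ν : Measure ℝ) (Λ : ℕ → ℝ) : Prop :=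
  ∃ A B : ℝ, 0 < A ∧ A ≤ B ∧ ∀ f : ℝ → ℂ, MemLp f 2 ν →
    A * (∫ t, ‖f t‖ ^ 2 ∂ν) ≤ ∑' n : ℕ, ‖∫ t, f t * ((t ^ Λ n : ℝ) : ℂ) ∂ν‖ ^ 2 ∧
    ∑' n : ℕ, ‖∫ t, f t * ((t ^ Λ n : ℝ) : ℂ) ∂ν‖ ^ 2 ≤ B * (∫ t, ‖f t‖ ^ 2 ∂ν)


open scoped ComplexConjugate

section FrameBounds

variable {X Y : Type*}

/-- `N x` stands for `‖x‖²` and `S x` for the frame sum `∑ᵢ |⟪x, xᵢ⟫|²`. -/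
def HasFrameBounds (N S : X → ℝ) : Prop :=
  ∃ A B : ℝ, 0 < A ∧ A ≤ B ∧ ∀ x, A * N x ≤ S x ∧ S x ≤ B * N x

theorem HasFrameBounds.of_rel {NX SX : X → ℝ} {NY SY : Y → ℝ} (R : X → Y → Prop) {a a' : ℝ}
    (ha : 0 < a) (haa' : a ≤ a') (hR : ∀ y, ∃ x, R x y) (hS : ∀ x y, R x y → SX x = SY y)
    (hN : ∀ x y, R x y → a * NY y ≤ NX x ∧ NX x ≤ a' * NY y) (h : HasFrameBounds NX SX) :
    HasFrameBounds NY SY := by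
  obtain ⟨A, B, hA, hAB, hbounds⟩ := h
  have hB : 0 ≤ B := (hA.trans_le hAB).le
  refine ⟨A * a, B * a', mul_pos hA ha, mul_le_mul hAB haa' ha.le hB, fun y => ?_⟩
  obtain ⟨x, hxy⟩ := hR y
  obtain ⟨hlow, hup⟩ := hN x y hxy
  rw [← hS x y hxy, mul_assoc, mul_assoc]
  exact ⟨(mul_le_mul_of_nonneg_left hlow hA.le).trans (hbounds x).1,
    (hbounds x).2.trans (mul_le_mul_of_nonneg_left hup hB)⟩

theorem hasFrameBounds_iff_of_rel {NX SX : X → ℝ} {NY SY : Y → ℝ} (R : X → Y → Prop)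
    {A₀ B₀ : ℝ} (hA₀ : 0 < A₀) (hA₀B₀ : A₀ ≤ B₀) (hXY : ∀ x, ∃ y, R x y)
    (hYX : ∀ y, ∃ x, R x y) (hS : ∀ x y, R x y → SX x = SY y)
    (hN : ∀ x y, R x y → A₀ * NX x ≤ NY y ∧ NY y ≤ B₀ * NX x) :
    HasFrameBounds NX SX ↔ HasFrameBounds NY SY := by
  have hB₀ : 0 < B₀ := hA₀.trans_le hA₀B₀
  refine ⟨HasFrameBounds.of_rel R (inv_pos.2 hB₀) (inv_anti₀ hA₀ hA₀B₀) hYX hS fun x y h => ?_,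
    HasFrameBounds.of_rel (flip R) hA₀ hA₀B₀ hXY (fun y x h => (hS x y h).symm)
      fun y x h => hN x y h⟩
  exact ⟨(inv_mul_le_iff₀ hB₀).2 (hN x y h).2, (le_inv_mul_iff₀ hA₀).2 (hN x y h).1⟩

theorem isFrame_iff_hasFrameBounds {H ι : Type*} [NormedAddCommGroup H] [InnerProductSpace ℂ H]
    (x : ι → H) :
    IsFrame x ↔ HasFrameBounds (fun y : H => ‖y‖ ^ 2) fun y => ∑' i, ‖(inner ℂ y (x i) : ℂ)‖ ^ 2 :=
  Iff.rfl

theorem isPowerFrameL2_iff_hasFrameBounds (ν : Measure ℝ) (Λ : ℕ → ℝ) :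
    IsPowerFrameL2 ν Λ ↔
      HasFrameBounds (fun f : {f : ℝ → ℂ // MemLp f 2 ν} => ∫ t, ‖f.1 t‖ ^ 2 ∂ν)
        fun f => ∑' n, ‖∫ t, f.1 t * ((t ^ Λ n : ℝ) : ℂ) ∂ν‖ ^ 2 := by
  simp only [IsPowerFrameL2, HasFrameBounds, Subtype.forall]

end FrameBounds

section DiscMeasure

variable {μ : ℕ → ℝ} {E : Type*} [NormedAddCommGroup E]

theorem aestronglyMeasurable_discMeasure (g : ℝ → E) :
    AEStronglyMeasurable g (discMeasure μ) :=
  aestronglyMeasurable_sum_measure_iff.2 fun _ => aestronglyMeasurable_dirac.smul_measure _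

theorem integrable_discMeasure_iff (hμ : ∀ k, μ k ^ 2 ≤ 1) {g : ℝ → E} :
    Integrable g (discMeasure μ) ↔ Summable fun k => (1 - μ k ^ 2) * ‖g (μ k)‖ := by
  rw [discMeasure, integrable_sum_dirac_iff fun _ => ENNReal.ofReal_ne_top]
  simp only [ENNReal.toReal_ofReal (sub_nonneg.2 (hμ _))]

theorem hasSum_integral_discMeasure [NormedSpace ℝ E] [CompleteSpace E] (hμ : ∀ k, μ k ^ 2 ≤ 1)
    {g : ℝ → E} (hg : Summable fun k => (1 - μ k ^ 2) * ‖g (μ k)‖) :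
    HasSum (fun k => (1 - μ k ^ 2) • g (μ k)) (∫ t, g t ∂discMeasure μ) := by
  have hc : ∀ k, (ENNReal.ofReal (1 - μ k ^ 2)).toReal = 1 - μ k ^ 2 :=
    fun k => ENNReal.toReal_ofReal (sub_nonneg.2 (hμ k))
  have h := hasSum_integral_sum_dirac (f := g) (x := μ)
    (c := fun k => ENNReal.ofReal (1 - μ k ^ 2)) (fun _ => ENNReal.ofReal_ne_top)
    (by simpa only [hc] using hg)
  simp only [hc] at h
  exact h

theorem memLp_two_discMeasure_iff (hμ : ∀ k, μ k ^ 2 ≤ 1) {f : ℝ → E} :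
    MemLp f 2 (discMeasure μ) ↔ Summable fun k => (1 - μ k ^ 2) * ‖f (μ k)‖ ^ 2 := by
  rw [memLp_two_iff_integrable_sq_norm (aestronglyMeasurable_discMeasure f),
    integrable_discMeasure_iff hμ]
  simp only [norm_pow, norm_norm]

end DiscMeasure

section Ell2

variable {ι : Type*} {E : ι → Type*} [∀ i, NormedAddCommGroup (E i)]

theorem memℓp_two_iff_summable_sq_norm {f : ∀ i, E i} :
    Memℓp f 2 ↔ Summable fun i => ‖f i‖ ^ 2 := by
  rw [memℓp_gen_iff (by norm_num)]
  norm_num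

theorem lp.summable_sq_norm (f : lp E 2) : Summable fun i => ‖f i‖ ^ 2 :=
  memℓp_two_iff_summable_sq_norm.1 f.2

theorem lp.norm_sq_eq_tsum (f : lp E 2) : ‖f‖ ^ 2 = ∑' i, ‖f i‖ ^ 2 := by
  simpa using lp.norm_rpow_eq_tsum (p := 2) (by norm_num) f

end Ell2

theorem frame_bounds_coord {ι : Type*} {x : ι → ell2} {A B : ℝ}
    (h : ∀ y : ell2, A * ‖y‖ ^ 2 ≤ ∑' i, ‖(inner ℂ y (x i) : ℂ)‖ ^ 2 ∧
      ∑' i, ‖(inner ℂ y (x i) : ℂ)‖ ^ 2 ≤ B * ‖y‖ ^ 2) (k : ℕ) :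
    A ≤ ∑' i, ‖x i k‖ ^ 2 ∧ ∑' i, ‖x i k‖ ^ 2 ≤ B := by
  let e : ell2 := lp.single 2 k 1
  have hnorm : ‖e‖ = 1 := (lp.norm_single (by norm_num) k 1).trans norm_one
  have hinner : ∀ i, (inner ℂ e (x i) : ℂ) = x i k := fun i => by simp [e, lp.inner_single_left]
  simpa only [hnorm, hinner, one_pow, mul_one] using h e

theorem tsum_norm_sq_rpow_natCast_mul {m : ℝ} (hm : m ^ 2 < 1) (c : ℂ) :
    ∑' ℓ : ℕ, ‖((m ^ (ℓ : ℝ) : ℝ) : ℂ) * c‖ ^ 2 = ‖c‖ ^ 2 / (1 - m ^ 2) := by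
  have hterm : ∀ ℓ : ℕ, ‖((m ^ (ℓ : ℝ) : ℝ) : ℂ) * c‖ ^ 2 = (m ^ 2) ^ ℓ * ‖c‖ ^ 2 := fun ℓ => by
    rw [norm_mul, Complex.norm_real, Real.rpow_natCast, norm_pow, Real.norm_eq_abs, mul_pow,
      ← pow_mul, pow_mul', sq_abs]
  simp only [hterm, tsum_mul_right, tsum_geometric_of_lt_one (sq_nonneg m) hm, div_eq_inv_mul]

theorem orbit_weight_bounds {μ : ℕ → ℝ} (hμ : ∀ k, μ k ^ 2 < 1) {b : ell2} {x : ℕ → ell2}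
    (hx : ∀ ℓ k, x ℓ k = ((μ k ^ (ℓ : ℝ) : ℝ) : ℂ) * b k) {A B : ℝ}
    (h : ∀ y : ell2, A * ‖y‖ ^ 2 ≤ ∑' ℓ, ‖(inner ℂ y (x ℓ) : ℂ)‖ ^ 2 ∧
      ∑' ℓ, ‖(inner ℂ y (x ℓ) : ℂ)‖ ^ 2 ≤ B * ‖y‖ ^ 2) (k : ℕ) :
    A * (1 - μ k ^ 2) ≤ ‖b k‖ ^ 2 ∧ ‖b k‖ ^ 2 ≤ B * (1 - μ k ^ 2) := by
  have hw : 0 < 1 - μ k ^ 2 := sub_pos.2 (hμ k)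
  have hcoord := frame_bounds_coord h k
  simp only [hx, tsum_norm_sq_rpow_natCast_mul (hμ k)] at hcoord
  exact ⟨(le_div_iff₀ hw).1 hcoord.1, (div_le_iff₀ hw).1 hcoord.2⟩

theorem sq_bounds_of_mul_eq {a β w d A B : ℝ} (hw : 0 < w) (h : a * β = w * d)
    (hβ : A * w ≤ β ^ 2 ∧ β ^ 2 ≤ B * w) : A * a ^ 2 ≤ w * d ^ 2 ∧ w * d ^ 2 ≤ B * a ^ 2 := by
  have key : w * (w * d ^ 2) = a ^ 2 * β ^ 2 := by linear_combination (-(a * β) - w * d) * h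
  constructor <;> refine le_of_mul_le_mul_left ?_ hw <;> rw [key]
  · nlinarith [mul_le_mul_of_nonneg_left hβ.1 (sq_nonneg a)]
  · nlinarith [mul_le_mul_of_nonneg_left hβ.2 (sq_nonneg a)]

def Correspond (μ : ℕ → ℝ) (b c : ℕ → ℂ) (f : ℝ → ℂ) : Prop :=
  ∀ k, conj (c k) * b k = ((1 - μ k ^ 2 : ℝ) : ℂ) * f (μ k)

namespace Correspond

variable {μ : ℕ → ℝ} {b c : ℕ → ℂ} {f : ℝ → ℂ} {A₀ B₀ : ℝ}

theorem norm_mul_norm (h : Correspond μ b c f) (hμ : ∀ k, μ k ^ 2 ≤ 1) (k : ℕ) :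
    ‖c k‖ * ‖b k‖ = (1 - μ k ^ 2) * ‖f (μ k)‖ := by
  simpa only [norm_mul, RCLike.norm_conj, Complex.norm_real,
    Real.norm_of_nonneg (sub_nonneg.2 (hμ k))] using congrArg norm (h k)

theorem sq_norm_bounds (h : Correspond μ b c f) (hμ : ∀ k, μ k ^ 2 < 1)
    (hb : ∀ k, A₀ * (1 - μ k ^ 2) ≤ ‖b k‖ ^ 2 ∧ ‖b k‖ ^ 2 ≤ B₀ * (1 - μ k ^ 2)) (k : ℕ) :
    A₀ * ‖c k‖ ^ 2 ≤ (1 - μ k ^ 2) * ‖f (μ k)‖ ^ 2 ∧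
      (1 - μ k ^ 2) * ‖f (μ k)‖ ^ 2 ≤ B₀ * ‖c k‖ ^ 2 :=
  sq_bounds_of_mul_eq (sub_pos.2 (hμ k)) (h.norm_mul_norm (fun k => (hμ k).le) k) (hb k)

theorem memLp {y : ell2} (h : Correspond μ b y f) (hμ : ∀ k, μ k ^ 2 < 1)
    (hb : ∀ k, A₀ * (1 - μ k ^ 2) ≤ ‖b k‖ ^ 2 ∧ ‖b k‖ ^ 2 ≤ B₀ * (1 - μ k ^ 2)) :
    MemLp f 2 (discMeasure μ) :=
  (memLp_two_discMeasure_iff fun k => (hμ k).le).2 <|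
    .of_nonneg_of_le (fun k => mul_nonneg (sub_nonneg.2 (hμ k).le) (sq_nonneg _))
      (fun k => (h.sq_norm_bounds hμ hb k).2) ((lp.summable_sq_norm y).mul_left B₀)

theorem memℓp (h : Correspond μ b c f) (hμ : ∀ k, μ k ^ 2 < 1) (hA₀ : 0 < A₀)
    (hb : ∀ k, A₀ * (1 - μ k ^ 2) ≤ ‖b k‖ ^ 2 ∧ ‖b k‖ ^ 2 ≤ B₀ * (1 - μ k ^ 2))
    (hf : MemLp f 2 (discMeasure μ)) : Memℓp c 2 :=
  memℓp_two_iff_summable_sq_norm.2 <|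
    .of_nonneg_of_le (fun _ => sq_nonneg _)
      (fun k => (le_inv_mul_iff₀ hA₀).2 (h.sq_norm_bounds hμ hb k).1)
      (((memLp_two_discMeasure_iff fun k => (hμ k).le).1 hf).mul_left A₀⁻¹)

theorem integral_sq_norm_bounds {y : ell2} (h : Correspond μ b y f) (hμ : ∀ k, μ k ^ 2 < 1)
    (hb : ∀ k, A₀ * (1 - μ k ^ 2) ≤ ‖b k‖ ^ 2 ∧ ‖b k‖ ^ 2 ≤ B₀ * (1 - μ k ^ 2))
    (hf : MemLp f 2 (discMeasure μ)) :
    A₀ * ‖y‖ ^ 2 ≤ ∫ t, ‖f t‖ ^ 2 ∂discMeasure μ ∧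
      ∫ t, ‖f t‖ ^ 2 ∂discMeasure μ ≤ B₀ * ‖y‖ ^ 2 := by
  have hμ' : ∀ k, μ k ^ 2 ≤ 1 := fun k => (hμ k).le
  have hint : HasSum (fun k => (1 - μ k ^ 2) * ‖f (μ k)‖ ^ 2) (∫ t, ‖f t‖ ^ 2 ∂discMeasure μ) := by
    simpa using hasSum_integral_discMeasure hμ' (g := fun t => ‖f t‖ ^ 2)
      (by simpa using (memLp_two_discMeasure_iff hμ').1 hf)
  have hy := lp.summable_sq_norm y
  rw [lp.norm_sq_eq_tsum, ← tsum_mul_left, ← tsum_mul_left]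
  exact ⟨hasSum_le (fun k => (h.sq_norm_bounds hμ hb k).1) (hy.mul_left A₀).hasSum hint,
    hasSum_le (fun k => (h.sq_norm_bounds hμ hb k).2) hint (hy.mul_left B₀).hasSum⟩

theorem inner_eq_integral {y : ell2} (h : Correspond μ b y f) (hμ : ∀ k, μ k ^ 2 ≤ 1)
    {lam : ℝ} {x : ell2} (hx : ∀ k, x k = ((μ k ^ lam : ℝ) : ℂ) * b k) :
    (inner ℂ y x : ℂ) = ∫ t, f t * ((t ^ lam : ℝ) : ℂ) ∂discMeasure μ := by
  have hterm : ∀ k, conj (y k) * x k = (1 - μ k ^ 2 : ℝ) • (f (μ k) * ((μ k ^ lam : ℝ) : ℂ)) := by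
    intro k
    rw [hx k, Complex.real_smul, mul_left_comm, h k]
    ring
  have hsum : Summable fun k => (1 - μ k ^ 2) * ‖f (μ k) * ((μ k ^ lam : ℝ) : ℂ)‖ := by
    refine (lp.summable_mul (by simpa using Real.HolderConjugate.two_two) y x).congr fun k => ?_
    simpa only [norm_mul, RCLike.norm_conj, norm_smul,
      Real.norm_of_nonneg (sub_nonneg.2 (hμ k))] using congrArg norm (hterm k)
  have hinner : HasSum (fun k => conj (y k) * x k) (inner ℂ y x) := by
    have e : (fun k => (inner ℂ (y k) (x k) : ℂ)) = fun k => conj (y k) * x k :=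
      funext fun k => RCLike.inner_apply' (y k) (x k)
    exact e ▸ lp.hasSum_inner y x
  rw [funext hterm] at hinner
  exact hinner.unique
    (hasSum_integral_discMeasure hμ (g := fun t => f t * ((t ^ lam : ℝ) : ℂ)) hsum)

end Correspond

theorem exists_correspond_of_ell2 {μ : ℕ → ℝ} (hinj : Function.Injective μ)
    (hμ : ∀ k, μ k ^ 2 < 1) (b c : ℕ → ℂ) : ∃ f : ℝ → ℂ, Correspond μ b c f := by
  refine ⟨Function.extend μ (fun k => conj (c k) * b k / ((1 - μ k ^ 2 : ℝ) : ℂ)) 0, fun k => ?_⟩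
  have hw : ((1 - μ k ^ 2 : ℝ) : ℂ) ≠ 0 := Complex.ofReal_ne_zero.2 (sub_pos.2 (hμ k)).ne'
  rw [hinj.extend_apply, mul_div_cancel₀ _ hw]

theorem exists_correspond_of_memLp {μ : ℕ → ℝ} (hμ : ∀ k, μ k ^ 2 < 1) {b : ℕ → ℂ} {A₀ B₀ : ℝ}
    (hA₀ : 0 < A₀) (hb : ∀ k, A₀ * (1 - μ k ^ 2) ≤ ‖b k‖ ^ 2 ∧ ‖b k‖ ^ 2 ≤ B₀ * (1 - μ k ^ 2))
    {f : ℝ → ℂ} (hf : MemLp f 2 (discMeasure μ)) : ∃ y : ell2, Correspond μ b y f := by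
  have hb0 : ∀ k, b k ≠ 0 := fun k hk => by
    have := (hb k).1
    rw [hk, norm_zero] at this
    nlinarith [sub_pos.2 (hμ k)]
  let c : ℕ → ℂ := fun k => conj (((1 - μ k ^ 2 : ℝ) : ℂ) * f (μ k) / b k)
  have hc : Correspond μ b c f := fun k => by
    simp only [c, Complex.conj_conj, div_mul_cancel₀ _ (hb0 k)]
  exact ⟨⟨c, hc.memℓp hμ hA₀ hb hf⟩, hc⟩

theorem fractional_orbit_frame_iff_power_frame
    (μ : ℕ → ℝ) (hμ : ∀ k, μ k ∈ Set.Ioo (0 : ℝ) 1) (hdist : Function.Injective μ)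
    (b : ell2)
    (hmem : ∀ lam : ℝ, 0 ≤ lam → Memℓp (fun k => ((μ k ^ lam : ℝ) : ℂ) * b k) 2)
    (horbit : IsFrame (fun ℓ : ℕ =>
      (⟨fun k => ((μ k ^ (ℓ : ℝ) : ℝ) : ℂ) * b k, hmem _ (Nat.cast_nonneg ℓ)⟩ : ell2)))
    (Λ : ℕ → ℝ) (hΛ : ∀ n, 0 ≤ Λ n) :
    IsFrame (fun n : ℕ =>
        (⟨fun k => ((μ k ^ Λ n : ℝ) : ℂ) * b k, hmem _ (hΛ n)⟩ : ell2)) ↔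
      IsPowerFrameL2 (discMeasure μ) Λ := by
  obtain ⟨A₀, B₀, hA₀, hA₀B₀, horbit⟩ := horbit
  have hμ1 : ∀ k, μ k ^ 2 < 1 := fun k => by nlinarith [(hμ k).1, (hμ k).2]
  have hb := orbit_weight_bounds hμ1 (fun _ _ => rfl) horbit
  rw [isFrame_iff_hasFrameBounds, isPowerFrameL2_iff_hasFrameBounds]
  refine hasFrameBounds_iff_of_rel (fun y f => Correspond μ b y f.1) hA₀ hA₀B₀ ?_ ?_ ?_ ?_
  · intro y
    obtain ⟨f, hf⟩ := exists_correspond_of_ell2 hdist hμ1 b y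
    exact ⟨⟨f, hf.memLp hμ1 hb⟩, hf⟩
  · rintro ⟨f, hf⟩
    exact exists_correspond_of_memLp hμ1 hA₀ hb hf
  · rintro y ⟨f, _⟩ hyf
    exact tsum_congr fun n => by
      rw [Correspond.inner_eq_integral hyf (fun k => (hμ1 k).le) fun _ => rfl]
  · rintro y ⟨f, hf⟩ hyf
    exact Correspond.integral_sq_norm_bounds hyf hμ1 hb hf
end
end

section
/- For x > 0 define S(x) = ∑_{n=2}^∞ exp(−n x log n); this series converges for every x > 0. Then x S(x) → 0 as x → 0 from the right, i.e. the function x ↦ x S(x) tends to 0 along the filter of positive reals approaching 0. -/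
open Filter Topology

noncomputable section

/-!
Split `S(x)` at an arbitrary index `N`: the first `N` terms are at most `1`, and from index `N` on
the terms are dominated by the geometric series with ratio `r = (N + 2)^(-x)`, whose sum
`(1 - r)⁻¹` is at most `1 + (x log (N + 2))⁻¹` because `1 + y ≤ exp y`. Hence
`x S(x) ≤ x (N + 1) + (log (N + 2))⁻¹` for every `N`; let `x → 0` and then `N → ∞`.
-/

lemma Real.inv_one_sub_exp_neg_le {y : ℝ} (hy : 0 < y) : (1 - exp (-y))⁻¹ ≤ 1 + y⁻¹ := by
  have h : exp (-y) * (y + 1) ≤ 1 := by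
    rw [exp_neg, inv_mul_le_iff₀ (exp_pos y), mul_one]; exact add_one_le_exp y
  rw [inv_le_iff_one_le_mul₀ (sub_pos.2 (exp_lt_one_iff.2 (neg_lt_zero.2 hy)))]
  field_simp
  nlinarith

namespace SelfPowerSeries

open Real

/-- The summand of `S(x)`, with the index shifted so that `n = 0` corresponds to `n = 2`. -/
def term (x : ℝ) (n : ℕ) : ℝ := exp (-(((n : ℝ) + 2) * x * log ((n : ℝ) + 2)))

lemma log_natCast_add_two_pos (n : ℕ) : 0 < log ((n : ℝ) + 2) :=
  log_pos (by linarith [n.cast_nonneg (α := ℝ)])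

lemma nat_mul_log_le_add (n N : ℕ) :
    n * log (N + 2) ≤ ((n + N : ℕ) + 2) * log ((n + N : ℕ) + 2) := by
  push_cast
  gcongr
  · exact (log_natCast_add_two_pos N).le
  · linarith [N.cast_nonneg (α := ℝ)]
  · linarith [n.cast_nonneg (α := ℝ)]

lemma term_add_le {x : ℝ} (hx : 0 ≤ x) (n N : ℕ) :
    term x (n + N) ≤ exp (-(x * log (N + 2))) ^ n := by
  rw [term, ← exp_nat_mul, exp_le_exp]
  nlinarith [mul_le_mul_of_nonneg_right (nat_mul_log_le_add n N) hx]

lemma term_nonneg (x : ℝ) (n : ℕ) : 0 ≤ term x n := (exp_pos _).le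

lemma term_le_one {x : ℝ} (hx : 0 ≤ x) (n : ℕ) : term x n ≤ 1 :=
  have := log_natCast_add_two_pos n
  exp_le_one_iff.2 (neg_nonpos.2 (by positivity))

lemma exp_neg_mul_log_lt_one {x : ℝ} (hx : 0 < x) (N : ℕ) : exp (-(x * log (N + 2))) < 1 :=
  exp_lt_one_iff.2 (neg_lt_zero.2 (mul_pos hx (log_natCast_add_two_pos N)))

lemma summable_term {x : ℝ} (hx : 0 < x) : Summable (term x) :=
  .of_nonneg_of_le (term_nonneg x) (fun n => term_add_le hx.le n 0)
    (summable_geometric_of_lt_one (exp_pos _).le (exp_neg_mul_log_lt_one hx 0))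

lemma tsum_term_le {x : ℝ} (hx : 0 < x) (N : ℕ) :
    ∑' n, term x n ≤ N + 1 + (x * log (N + 2))⁻¹ := by
  set r := exp (-(x * log (N + 2)))
  have hr : r < 1 := exp_neg_mul_log_lt_one hx N
  have hhead : ∑ n ∈ Finset.range N, term x n ≤ N := by
    simpa using Finset.sum_le_card_nsmul (Finset.range N) _ 1 fun n _ => term_le_one hx.le n
  have htail : ∑' n, term x (n + N) ≤ (1 - r)⁻¹ := by
    rw [← tsum_geometric_of_lt_one (exp_pos _).le hr]
    exact Summable.tsum_le_tsum (fun n => term_add_le hx.le n N)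
      ((summable_nat_add_iff N).2 (summable_term hx))
      (summable_geometric_of_lt_one (exp_pos _).le hr)
  rw [← (summable_term hx).sum_add_tsum_nat_add N, add_assoc]
  exact add_le_add hhead (htail.trans (inv_one_sub_exp_neg_le
    (mul_pos hx (log_natCast_add_two_pos N))))

lemma mul_tsum_term_le {x : ℝ} (hx : 0 < x) (N : ℕ) :
    x * ∑' n, term x n ≤ x * (N + 1) + (log (N + 2))⁻¹ := by
  have := log_natCast_add_two_pos N
  calc x * ∑' n, term x n ≤ x * (N + 1 + (x * log (N + 2))⁻¹) :=
        mul_le_mul_of_nonneg_left (tsum_term_le hx N) hx.le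
    _ = x * (N + 1) + (log (N + 2))⁻¹ := by field_simp

lemma eventually_mul_tsum_term_lt {ε : ℝ} (hε : 0 < ε) :
    ∀ᶠ x in 𝓝[>] 0, x * ∑' n, term x n < ε := by
  obtain ⟨N, hN⟩ : ∃ N : ℕ, (log (N + 2))⁻¹ < ε :=
    ((tendsto_inv_atTop_zero.comp (tendsto_log_atTop.comp
      (tendsto_atTop_add_const_right _ 2 tendsto_natCast_atTop_atTop))).eventually
      (gt_mem_nhds hε)).exists
  have hbound : Tendsto (fun x : ℝ => x * (N + 1) + (log (N + 2))⁻¹) (𝓝[>] 0)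
      (𝓝 (log (N + 2))⁻¹) := by
    refine tendsto_nhdsWithin_of_tendsto_nhds (Continuous.tendsto' ?_ _ _ (by simp))
    fun_prop
  filter_upwards [self_mem_nhdsWithin, hbound.eventually (gt_mem_nhds hN)] with x hx hxε
  exact (mul_tsum_term_le hx N).trans_lt hxε

end SelfPowerSeries

open SelfPowerSeries

theorem xS_tendsto_zero :
    (∀ x : ℝ, 0 < x →
      Summable fun n : ℕ => Real.exp (-(((n : ℝ) + 2) * x * Real.log ((n : ℝ) + 2)))) ∧
    Tendsto
      (fun x : ℝ =>
        x * ∑' n : ℕ, Real.exp (-(((n : ℝ) + 2) * x * Real.log ((n : ℝ) + 2))))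
      (𝓝[>] (0 : ℝ)) (𝓝 0) := by
  refine ⟨fun x hx => summable_term hx, tendsto_order.2 ⟨fun a ha => ?_, fun ε hε => ?_⟩⟩
  · filter_upwards [self_mem_nhdsWithin] with x hx
    exact ha.trans_le (mul_nonneg hx.le (tsum_nonneg (term_nonneg x)))
  · exact eventually_mul_tsum_term_lt hε
end
end

section
/- Let (μ_k)_{k∈ℕ} be a sequence of pairwise distinct points of (0,1) with μ_k → 1, and let (λ_n)_{n≥2} be real numbers with λ_n ≥ n log n for all n ≥ 2. Then inf_{k} (1 − μ_k²) ∑_{n=2}^∞ μ_k^{2 λ_n} = 0. Consequently, with ν = ∑_{k≥0} (1 − μ_k²) δ_{μ_k} the discrete measure on [0,1), the family of functions (t ↦ t^{λ_n})_{n≥2} admits no positive lower frame bound in L²(ν): there is no constant A > 0 such that A ‖f‖²_{L²(ν)} ≤ ∑_{n≥2} |⟨f, t^{λ_n}⟩_{L²(ν)}|² for all f ∈ L²(ν). -/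
/-!
Testing a lower frame inequality against the indicator of the atom `μ k` gives
`A ≤ (1 - μ k ^ 2) * ∑ₙ μ k ^ (2 λₙ)`, so both claims follow once `(1 - x²) ∑ₙ x ^ (2 λₙ) → 0`
as `x → 1⁻`. Since `λₙ ≥ n log N` for `n ≥ N`, comparison with a geometric series bounds the sum
by `N + (1 - x ^ (2 log N))⁻¹`, and the Bernoulli-type estimate `x ^ a ≤ (1 + a (1 - x))⁻¹` turns
this into `(1 - x²) ∑ₙ x ^ (2 λₙ) ≤ 2 (1 - x) (N + 1) + 1 / log N`. Let `x → 1`, then `N → ∞`.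
-/

open MeasureTheory Filter Topology

noncomputable section

theorem inv_one_sub_rpow_le {x a : ℝ} (hx0 : 0 < x) (hx1 : x < 1) (ha : 0 < a) :
    (1 - x ^ a)⁻¹ ≤ 1 + (a * (1 - x))⁻¹ := by
  set u := a * (1 - x)
  have hu : 0 < u := mul_pos ha (by linarith)
  have hpow : x ^ a ≤ (1 + u)⁻¹ :=
    calc x ^ a = Real.exp (Real.log x * a) := Real.rpow_def_of_pos hx0 a
      _ ≤ Real.exp (-u) := by
        gcongr
        nlinarith [Real.log_le_sub_one_of_pos hx0]
      _ ≤ (1 + u)⁻¹ := by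
        rw [Real.exp_neg]
        gcongr
        linarith [Real.add_one_le_exp u]
  have hgap : u / (1 + u) ≤ 1 - x ^ a := by
    rw [div_eq_mul_inv]
    have : u * (1 + u)⁻¹ = 1 - (1 + u)⁻¹ := by field_simp; ring
    linarith
  calc (1 - x ^ a)⁻¹ ≤ (u / (1 + u))⁻¹ := inv_anti₀ (by positivity) hgap
    _ = 1 + u⁻¹ := by field_simp; ring

theorem tsum_rpow_le_of_mul_log_le {x : ℝ} (hx0 : 0 < x) (hx1 : x < 1) {lam : ℕ → ℝ}
    (hlam : ∀ n : ℕ, 2 ≤ n → (n : ℝ) * Real.log n ≤ lam n) {N : ℕ} (hN : 2 ≤ N) :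
    ∑' n : {n : ℕ // 2 ≤ n}, x ^ (2 * lam n) ≤ N + (1 - x ^ (2 * Real.log N))⁻¹ := by
  set r := x ^ (2 * Real.log N)
  have hlogN : 0 < Real.log N := Real.log_pos (by exact_mod_cast hN)
  have hr0 : 0 ≤ r := Real.rpow_nonneg hx0.le _
  have hr1 : r < 1 := Real.rpow_lt_one hx0.le hx1 (by positivity)
  set F := {n : ℕ | 2 ≤ n}.indicator fun n => x ^ (2 * lam n)
  set G : ℕ → ℝ := fun n => (Set.Iio N).indicator 1 n + r ^ n
  have hF0 : 0 ≤ F := Set.indicator_nonneg fun n _ => Real.rpow_nonneg hx0.le _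
  have hFG : F ≤ G := by
    intro n
    by_cases h2 : 2 ≤ n
    · have hlam0 : 0 ≤ 2 * lam n := by
        have := hlam n h2
        have : 0 ≤ (n : ℝ) * Real.log n := by positivity
        linarith
      simp only [F, G, Set.indicator_of_mem (show n ∈ {n : ℕ | 2 ≤ n} from h2)]
      rcases lt_or_ge n N with hn | hn
      · rw [Set.indicator_of_mem (show n ∈ Set.Iio N from hn)]
        have := pow_nonneg hr0 n
        have := Real.rpow_le_one hx0.le hx1.le hlam0
        simp only [Pi.one_apply]
        linarith
      · rw [Set.indicator_of_notMem (show n ∉ Set.Iio N from not_lt.2 hn), zero_add,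
          ← Real.rpow_natCast, ← Real.rpow_mul hx0.le]
        refine Real.rpow_le_rpow_of_exponent_ge hx0 hx1.le ?_
        have := hlam n h2
        have : Real.log N ≤ Real.log n := Real.log_le_log (by positivity) (by exact_mod_cast hn)
        nlinarith
    · simp only [F, G, Set.indicator_of_notMem (show n ∉ {n : ℕ | 2 ≤ n} from h2)]
      have := pow_nonneg hr0 n
      have : 0 ≤ (Set.Iio N).indicator (1 : ℕ → ℝ) n :=
        Set.indicator_nonneg (fun _ _ => zero_le_one) n
      linarith
  have hG : HasSum G (N + (1 - r)⁻¹) := by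
    refine HasSum.add ?_ (hasSum_geometric_of_lt_one hr0 hr1)
    have := hasSum_sum_of_ne_finset_zero (L := SummationFilter.unconditional ℕ)
      (f := (Set.Iio N).indicator (1 : ℕ → ℝ)) (s := Finset.range N)
      fun n hn => Set.indicator_of_notMem (by simpa using hn) _
    rwa [Finset.sum_congr rfl (g := fun _ => 1) fun n hn => Set.indicator_of_mem (s := Set.Iio N)
      (Finset.mem_range.1 hn : n ∈ Set.Iio N) (1 : ℕ → ℝ), Finset.sum_const, Finset.card_range,
      nsmul_one] at this
  calc ∑' n : {n : ℕ // 2 ≤ n}, x ^ (2 * lam n) = ∑' n, F n :=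
        tsum_subtype {n : ℕ | 2 ≤ n} fun n => x ^ (2 * lam n)
    _ ≤ N + (1 - r)⁻¹ := hasSum_le hFG (Summable.of_nonneg_of_le hF0 hFG hG.summable).hasSum hG

theorem weighted_tsum_rpow_nonneg {x : ℝ} (hx0 : 0 ≤ x) (hx1 : x ≤ 1) (lam : ℕ → ℝ) :
    0 ≤ (1 - x ^ 2) * ∑' n : {n : ℕ // 2 ≤ n}, x ^ (2 * lam n) :=
  mul_nonneg (by nlinarith) (tsum_nonneg fun _ => Real.rpow_nonneg hx0 _)

theorem weighted_tsum_rpow_le_of_mul_log_le {x : ℝ} (hx0 : 0 < x) (hx1 : x < 1)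
    {lam : ℕ → ℝ}
    (hlam : ∀ n : ℕ, 2 ≤ n → (n : ℝ) * Real.log n ≤ lam n) {N : ℕ} (hN : 2 ≤ N) :
    (1 - x ^ 2) * ∑' n : {n : ℕ // 2 ≤ n}, x ^ (2 * lam n) ≤
      2 * (1 - x) * (N + 1) + (Real.log N)⁻¹ := by
  have hlogN : 0 < Real.log N := Real.log_pos (by exact_mod_cast hN)
  have hsum := (tsum_rpow_le_of_mul_log_le hx0 hx1 hlam hN).trans
    (add_le_add le_rfl (inv_one_sub_rpow_le hx0 hx1 (by positivity : 0 < 2 * Real.log N)))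
  calc (1 - x ^ 2) * ∑' n : {n : ℕ // 2 ≤ n}, x ^ (2 * lam n)
      ≤ (1 - x ^ 2) * (N + (1 + (2 * Real.log N * (1 - x))⁻¹)) :=
        mul_le_mul_of_nonneg_left hsum (by nlinarith)
    _ = (1 + x) * (1 - x) * (N + 1) + (1 + x) / 2 * (Real.log N)⁻¹ := by
        field_simp [(by linarith : 1 - x ≠ 0)]
        ring
    _ ≤ 2 * (1 - x) * (N + 1) + 1 * (Real.log N)⁻¹ := by
        gcongr <;> linarith
    _ = 2 * (1 - x) * (N + 1) + (Real.log N)⁻¹ := by rw [one_mul]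

theorem tendsto_weighted_tsum_rpow_of_mul_log_le {lam : ℕ → ℝ}
    (hlam : ∀ n : ℕ, 2 ≤ n → (n : ℝ) * Real.log n ≤ lam n) :
    Tendsto (fun x : ℝ => (1 - x ^ 2) * ∑' n : {n : ℕ // 2 ≤ n}, x ^ (2 * lam n))
      (𝓝[<] 1) (𝓝 0) := by
  have hunit : ∀ᶠ x in 𝓝[<] (1 : ℝ), x ∈ Set.Ioo 0 1 := Ioo_mem_nhdsLT one_pos
  rw [tendsto_order]
  refine ⟨fun a ha => ?_, fun ε hε => ?_⟩
  · filter_upwards [hunit] with x hx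
    exact ha.trans_le (weighted_tsum_rpow_nonneg hx.1.le hx.2.le lam)
  obtain ⟨N, hNε, hN⟩ : ∃ N : ℕ, (Real.log N)⁻¹ < ε ∧ 2 ≤ N :=
    (((tendsto_inv_atTop_zero.comp (Real.tendsto_log_atTop.comp
      tendsto_natCast_atTop_atTop)).eventually (gt_mem_nhds hε)).and
      (eventually_ge_atTop 2)).exists
  have hbound : Tendsto (fun x : ℝ => 2 * (1 - x) * (N + 1) + (Real.log N)⁻¹) (𝓝[<] 1)
      (𝓝 (Real.log N)⁻¹) := by
    have hc : Continuous fun x : ℝ => 2 * (1 - x) * (N + 1) + (Real.log N)⁻¹ := by fun_prop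
    simpa using (hc.tendsto 1).mono_left nhdsWithin_le_nhds
  filter_upwards [hunit, hbound.eventually (gt_mem_nhds hNε)] with x hx hxε
  exact (weighted_tsum_rpow_le_of_mul_log_le hx.1 hx.2 hlam hN).trans_lt hxε

theorem discMeasure_singleton {μ : ℕ → ℝ} (hdist : Function.Injective μ) (k : ℕ) :
    discMeasure μ {μ k} = ENNReal.ofReal (1 - μ k ^ 2) := by
  rw [discMeasure, Measure.sum_apply _ (measurableSet_singleton _), tsum_eq_single k]
  · simp
  · intro j hj
    simp [hdist.ne hj]

theorem integral_indicator_singleton_one_mul {α 𝕜 : Type*} [MeasurableSpace α]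
    [MeasurableSingletonClass α] [RCLike 𝕜] (ν : Measure α) (a : α) (g : α → 𝕜) :
    ∫ t, ({a} : Set α).indicator 1 t * g t ∂ν = ν.real {a} • g a := by
  simp_rw [← Set.indicator_mul_left, Pi.one_apply, one_mul]
  rw [integral_indicator (measurableSet_singleton a), integral_singleton]

theorem le_weighted_tsum_of_lower_frame_bound {μ : ℕ → ℝ} (hdist : Function.Injective μ)
    {lam : ℕ → ℝ} {A : ℝ}
    (hframe : ∀ f : ℝ → ℂ, MemLp f 2 (discMeasure μ) →
      A * (∫ t, ‖f t‖ ^ 2 ∂(discMeasure μ)) ≤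
        ∑' n : {n : ℕ // 2 ≤ n},
          ‖∫ t, f t * ((t ^ lam (n : ℕ) : ℝ) : ℂ) ∂(discMeasure μ)‖ ^ 2)
    {k : ℕ} (hk : μ k ∈ Set.Ico 0 1) :
    A ≤ (1 - μ k ^ 2) * ∑' n : {n : ℕ // 2 ≤ n}, μ k ^ (2 * lam n) := by
  set x := μ k
  set f : ℝ → ℂ := ({x} : Set ℝ).indicator 1
  have hw : 0 < 1 - x ^ 2 := by nlinarith [hk.1, hk.2]
  have hmass : (discMeasure μ).real {x} = 1 - x ^ 2 := by
    rw [measureReal_def, discMeasure_singleton hdist, ENNReal.toReal_ofReal hw.le]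
  have hf : MemLp f 2 (discMeasure μ) :=
    memLp_indicator_const 2 (measurableSet_singleton x) 1
      (Or.inr (by rw [discMeasure_singleton hdist]; exact ENNReal.ofReal_ne_top))
  have hnorm : ∫ t, ‖f t‖ ^ 2 ∂(discMeasure μ) = 1 - x ^ 2 := by
    have : (fun t => ‖f t‖ ^ 2) = ({x} : Set ℝ).indicator 1 := by
      ext t
      by_cases ht : t = x <;> simp [f, ht]
    rw [this, integral_indicator_one (measurableSet_singleton x), hmass]
  have hcoeff : ∀ n : {n : ℕ // 2 ≤ n},
      ‖∫ t, f t * ((t ^ lam (n : ℕ) : ℝ) : ℂ) ∂(discMeasure μ)‖ ^ 2 =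
        (1 - x ^ 2) ^ 2 * x ^ (2 * lam n) := by
    intro n
    rw [integral_indicator_singleton_one_mul, hmass, norm_smul, Complex.norm_real,
      Real.norm_of_nonneg hw.le, Real.norm_of_nonneg (Real.rpow_nonneg hk.1 _), mul_pow,
      mul_comm 2, Real.rpow_mul hk.1, Real.rpow_two]
  have h := hframe f hf
  rw [hnorm, tsum_congr hcoeff, tsum_mul_left] at h
  exact le_of_mul_le_mul_right (h.trans_eq (by ring)) hw

theorem no_lower_frame_bound_of_fast_exponents
    (μ : ℕ → ℝ) (hμ : ∀ k, μ k ∈ Set.Ioo (0 : ℝ) 1) (hdist : Function.Injective μ)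
    (hlim : Tendsto μ atTop (𝓝 1))
    (lam : ℕ → ℝ) (hlam : ∀ n : ℕ, 2 ≤ n → (n : ℝ) * Real.log n ≤ lam n) :
    (⨅ k : ℕ, (1 - μ k ^ 2) * ∑' n : {n : ℕ // 2 ≤ n}, μ k ^ (2 * lam (n : ℕ)) = 0) ∧
    ¬ ∃ A : ℝ, 0 < A ∧ ∀ f : ℝ → ℂ, MemLp f 2 (discMeasure μ) →
        A * (∫ t, ‖f t‖ ^ 2 ∂(discMeasure μ)) ≤
          ∑' n : {n : ℕ // 2 ≤ n},
            ‖∫ t, f t * ((t ^ lam (n : ℕ) : ℝ) : ℂ) ∂(discMeasure μ)‖ ^ 2 := by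
  have htend := (tendsto_weighted_tsum_rpow_of_mul_log_le hlam).comp
    (tendsto_nhdsWithin_iff.2 ⟨hlim, .of_forall fun k => (hμ k).2⟩)
  have hnonneg k := weighted_tsum_rpow_nonneg (hμ k).1.le (hμ k).2.le lam
  refine ⟨le_antisymm (ge_of_tendsto' htend fun k => ciInf_le ⟨0, ?_⟩ k) (le_ciInf hnonneg), ?_⟩
  · rintro _ ⟨k, rfl⟩
    exact hnonneg k
  rintro ⟨A, hA, hframe⟩
  exact hA.not_ge (ge_of_tendsto' htend fun k =>
    le_weighted_tsum_of_lower_frame_bound hdist hframe (Set.Ioo_subset_Ico_self (hμ k)))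
end
end

section
/- (Bourdon–Narayan) Let φ : 𝔻 → 𝔻 and u : 𝔻 → ℂ be holomorphic with u not identically zero, and suppose W : ℓ² → ℓ² is a continuous linear map satisfying f_{Wa}(z) = u(z) · f_a(φ(z)) for all a ∈ ℓ² and all z ∈ 𝔻. Then W is a unitary operator on ℓ² if and only if φ is a holomorphic automorphism of 𝔻 and there exist p ∈ 𝔻 with φ(p) = 0 and c ∈ ℂ with |c| = 1 such that u(z) = c √(1 − |p|²) / (1 − conj(p) z) for all z ∈ 𝔻 (that is, u = c K_p/‖K_p‖ where K_p(z) = 1/(1 − conj(p) z) is the reproducing kernel of H²(𝔻) at p and ‖K_p‖ = (1 − |p|²)^{−1/2}). -/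
/-!
The adjoint of `W` sends the reproducing kernel `K_z` of `H²` to `conj (u z) • K_{φ z}`, and the
kernels are total, so `W W* = 1` amounts to the scalar identity
`u z · conj (u w) · (1 - z w̄) = 1 - φ z · conj (φ w)` on the disc. Setting `w = 0` shows that
`τ = σ_a ∘ φ`, with `σ_a` the Möbius involution and `a = φ 0`, satisfies `τ z · conj (τ w) = z w̄`,
so `τ` is a rotation: `φ` is a rotation of `σ_p`, and `u` is a unimodular multiple of the
normalized kernel at `p`. Conversely, by the equality case of the Schwarz lemma an automorphism
vanishing at `p` is a rotation of `σ_p`; the scalar identity then follows by algebra, and `W` is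
injective because `u` has no zeros and `φ` is onto, which upgrades `W W* = 1` to unitarity.
-/

open Metric

noncomputable section

/-- `f_a(z) = ∑ aₙ zⁿ` for `a ∈ ℓ²`. -/
def hardyFun (a : ell2) (z : ℂ) : ℂ := ∑' n : ℕ, a n * z ^ n

open Set ComplexConjugate ContinuousLinearMap

lemma one_sub_mul_ne_zero_of_norm_lt_one {R : Type*} [NormedRing R] [NormOneClass R] {z w : R}
    (hz : ‖z‖ < 1) (hw : ‖w‖ < 1) : 1 - z * w ≠ 0 := by
  have : ‖z * w‖ < 1 := (norm_mul_le z w).trans_lt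
    (mul_lt_one_of_nonneg_of_lt_one_left (norm_nonneg z) hz hw.le)
  exact sub_ne_zero.2 fun h => by simp [← h] at this

lemma one_sub_conj_mul_ne_zero {p z : ℂ} (hp : ‖p‖ < 1) (hz : ‖z‖ < 1) : 1 - conj p * z ≠ 0 :=
  one_sub_mul_ne_zero_of_norm_lt_one (by rwa [Complex.norm_conj]) hz

lemma one_sub_mul_conj_ne_zero {z w : ℂ} (hz : ‖z‖ < 1) (hw : ‖w‖ < 1) : 1 - z * conj w ≠ 0 :=
  one_sub_mul_ne_zero_of_norm_lt_one hz (by rwa [Complex.norm_conj])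

lemma conj_mul_self_of_norm_eq_one {c : ℂ} (hc : ‖c‖ = 1) : conj c * c = 1 := by
  simp [Complex.conj_mul', hc]

/-- The involution `σ_p` of the unit disc exchanging `0` and `p`. -/
def moebius (p z : ℂ) : ℂ := (p - z) / (1 - conj p * z)

@[simp] lemma moebius_self (p : ℂ) : moebius p p = 0 := by simp [moebius]

@[simp] lemma moebius_zero (p : ℂ) : moebius p 0 = p := by simp [moebius]

lemma moebius_mul_eq_mul_moebius {c : ℂ} (hc : ‖c‖ = 1) (a z : ℂ) :
    moebius a (c * z) = c * moebius (conj c * a) z := by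
  have hcc : c * conj c = 1 := by rw [mul_comm]; exact conj_mul_self_of_norm_eq_one hc
  simp only [moebius, map_mul, Complex.conj_conj, ← mul_div_assoc]
  congr 1
  · linear_combination (-a) * hcc
  · ring

lemma one_sub_moebius_mul_conj_moebius {p z w : ℂ} (hz : 1 - conj p * z ≠ 0)
    (hw : 1 - conj p * w ≠ 0) :
    1 - moebius p z * conj (moebius p w) =
      (1 - p * conj p) * (1 - z * conj w) / ((1 - conj p * z) * (1 - p * conj w)) := by
  have hw' : 1 - p * conj w ≠ 0 := by simpa using (map_ne_zero conj).2 hw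
  have hz' : 1 - z * conj p ≠ 0 := by rwa [mul_comm]
  simp only [moebius, map_div₀, map_sub, map_mul, map_one, Complex.conj_conj]
  field_simp
  ring

lemma one_sub_conj_mul_moebius {p z : ℂ} (hz : 1 - conj p * z ≠ 0) :
    1 - conj p * moebius p z = (1 - p * conj p) / (1 - conj p * z) := by
  have hz' : 1 - z * conj p ≠ 0 := by rwa [mul_comm]
  rw [moebius]
  field_simp
  ring

lemma norm_moebius_lt_one {p z : ℂ} (hp : ‖p‖ < 1) (hz : ‖z‖ < 1) : ‖moebius p z‖ < 1 := by
  have hD := one_sub_conj_mul_ne_zero hp hz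
  have key : Complex.normSq (1 - conj p * z) - Complex.normSq (p - z) =
      (1 - Complex.normSq p) * (1 - Complex.normSq z) := by
    simp only [Complex.normSq_sub, Complex.normSq_conj, Complex.normSq_one,
      map_mul, Complex.conj_conj, one_mul]
    ring
  have hp2 : Complex.normSq p < 1 := by rw [Complex.normSq_eq_norm_sq]; nlinarith [norm_nonneg p]
  have hz2 : Complex.normSq z < 1 := by rw [Complex.normSq_eq_norm_sq]; nlinarith [norm_nonneg z]
  rw [moebius, norm_div, div_lt_one (norm_pos_iff.2 hD), ← sq_lt_sq₀ (norm_nonneg _)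
    (norm_nonneg _), Complex.sq_norm, Complex.sq_norm]
  nlinarith

lemma moebius_moebius {p z : ℂ} (hp : ‖p‖ < 1) (hz : ‖z‖ < 1) : moebius p (moebius p z) = z := by
  have hz' := one_sub_conj_mul_ne_zero hp hz
  have hp' := one_sub_mul_conj_ne_zero hp hp
  have hz'' : 1 - z * conj p ≠ 0 := by rwa [mul_comm]
  rw [moebius, one_sub_conj_mul_moebius hz', div_div_eq_mul_div, div_eq_iff hp', moebius]
  field_simp
  ring

lemma mapsTo_moebius {p : ℂ} (hp : ‖p‖ < 1) : MapsTo (moebius p) (ball 0 1) (ball 0 1) :=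
  fun _ hz => mem_ball_zero_iff.2 (norm_moebius_lt_one hp (mem_ball_zero_iff.1 hz))

lemma differentiableOn_moebius {p : ℂ} (hp : ‖p‖ < 1) :
    DifferentiableOn ℂ (moebius p) (ball 0 1) :=
  ((differentiableOn_const p).sub differentiableOn_id).div
    ((differentiableOn_const 1).sub (differentiableOn_id.const_mul _))
    fun _ hz => one_sub_conj_mul_ne_zero hp (mem_ball_zero_iff.1 hz)

lemma mapsTo_const_mul_ball {c : ℂ} (hc : ‖c‖ = 1) : MapsTo (c * ·) (ball (0 : ℂ) 1) (ball 0 1) :=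
  fun z hz => by simpa [norm_mul, hc] using hz

lemma exists_inverse_of_eq_mul_moebius {φ : ℂ → ℂ} {p c : ℂ} (hp : ‖p‖ < 1) (hc : ‖c‖ = 1)
    (hφ : ∀ z ∈ ball (0 : ℂ) 1, φ z = c * moebius p z) :
    ∃ ψ : ℂ → ℂ, DifferentiableOn ℂ ψ (ball 0 1) ∧ MapsTo ψ (ball 0 1) (ball 0 1) ∧
      (∀ z ∈ ball (0 : ℂ) 1, ψ (φ z) = z) ∧ (∀ z ∈ ball (0 : ℂ) 1, φ (ψ z) = z) := by
  have hc' : ‖conj c‖ = 1 := by rwa [Complex.norm_conj]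
  have hcc := conj_mul_self_of_norm_eq_one hc
  refine ⟨fun z => moebius p (conj c * z),
    (differentiableOn_moebius hp).comp (differentiableOn_id.const_mul _)
      (mapsTo_const_mul_ball hc'),
    (mapsTo_moebius hp).comp (mapsTo_const_mul_ball hc'), fun z hz => ?_, fun z hz => ?_⟩
  · dsimp only
    rw [hφ z hz, ← mul_assoc, hcc, one_mul, moebius_moebius hp (mem_ball_zero_iff.1 hz)]
  · have hz' : ‖conj c * z‖ < 1 := mem_ball_zero_iff.1 (mapsTo_const_mul_ball hc' hz)
    dsimp only
    rw [hφ _ (mapsTo_moebius hp (mapsTo_const_mul_ball hc' hz)), moebius_moebius hp hz',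
      ← mul_assoc, mul_comm c, hcc, one_mul]

lemma norm_eq_norm_of_mul_conj_eq {a b : ℂ} (h : a * conj a = b * conj b) : ‖a‖ = ‖b‖ := by
  rw [Complex.mul_conj', Complex.mul_conj'] at h
  exact (pow_left_inj₀ (norm_nonneg a) (norm_nonneg b) two_ne_zero).1 (mod_cast h)

lemma exists_norm_eq_one_eq_mul_of_mul_conj_eq {s : Set ℂ} {f : ℂ → ℂ} {z₀ : ℂ}
    (hz₀s : z₀ ∈ s) (hz₀ : z₀ ≠ 0) (hf : ∀ z ∈ s, ∀ w ∈ s, f z * conj (f w) = z * conj w) :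
    ∃ c : ℂ, ‖c‖ = 1 ∧ ∀ z ∈ s, f z = c * z := by
  have h₀ := hf z₀ hz₀s z₀ hz₀s
  have hnorm : ‖f z₀‖ = ‖z₀‖ := norm_eq_norm_of_mul_conj_eq h₀
  have hfz₀ : conj (f z₀) ≠ 0 := by
    rwa [map_ne_zero, ← norm_ne_zero_iff, hnorm, norm_ne_zero_iff]
  refine ⟨f z₀ / z₀, by rw [norm_div, hnorm, div_self (norm_ne_zero_iff.2 hz₀)], fun z hz => ?_⟩
  rw [div_mul_eq_mul_div, eq_div_iff hz₀]
  apply mul_right_cancel₀ hfz₀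
  linear_combination z₀ * hf z hz z₀ hz₀s - z * h₀

/-- The Schwarz lemma for `g` and for `h` gives `‖g z‖ = ‖z‖`; its equality case makes `g` a
rotation. -/
lemma exists_norm_eq_one_eq_mul_of_leftInvOn {g h : ℂ → ℂ}
    (hgd : DifferentiableOn ℂ g (ball 0 1)) (hgm : MapsTo g (ball 0 1) (ball 0 1))
    (hhd : DifferentiableOn ℂ h (ball 0 1)) (hhm : MapsTo h (ball 0 1) (ball 0 1))
    (hhg : LeftInvOn h g (ball 0 1)) (hg0 : g 0 = 0) :
    ∃ c : ℂ, ‖c‖ = 1 ∧ ∀ z ∈ ball (0 : ℂ) 1, g z = c * z := by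
  have h0 : (0 : ℂ) ∈ ball 0 1 := mem_ball_self one_pos
  have hh0 : h 0 = 0 := by simpa [hg0] using hhg h0
  have hnorm : ∀ z ∈ ball (0 : ℂ) 1, ‖g z‖ = ‖z‖ := by
    intro z hz
    have hgz := Complex.norm_le_norm_of_mapsTo_ball hgd (hgm.mono_right ball_subset_closedBall)
      hg0 (mem_ball_zero_iff.1 hz)
    have hhgz := Complex.norm_le_norm_of_mapsTo_ball hhd (hhm.mono_right ball_subset_closedBall)
      hh0 (mem_ball_zero_iff.1 (hgm hz))
    rw [hhg hz] at hhgz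
    exact le_antisymm hgz hhgz
  have hhalf : (1 / 2 : ℂ) ∈ ball 0 1 := by rw [mem_ball_zero_iff]; norm_num
  obtain ⟨c, hc, hgc⟩ := Complex.affine_of_mapsTo_ball_of_exists_norm_dslope_eq_div' hgd
    (by rw [hg0]; exact hgm.mono_right ball_subset_closedBall) ⟨1 / 2, hhalf, by
      rw [dslope_of_ne _ (by norm_num), slope_def_field, hg0, sub_zero, sub_zero, norm_div,
        hnorm _ hhalf]
      norm_num⟩
  exact ⟨c, by simpa using hc, fun z hz => by simpa [hg0, mul_comm] using hgc hz⟩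

lemma exists_norm_eq_one_eq_mul_moebius_of_leftInvOn {φ ψ : ℂ → ℂ} {p : ℂ}
    (hφd : DifferentiableOn ℂ φ (ball 0 1)) (hφm : MapsTo φ (ball 0 1) (ball 0 1))
    (hψd : DifferentiableOn ℂ ψ (ball 0 1)) (hψm : MapsTo ψ (ball 0 1) (ball 0 1))
    (hψφ : LeftInvOn ψ φ (ball 0 1)) (hp : ‖p‖ < 1) (hφp : φ p = 0) :
    ∃ c : ℂ, ‖c‖ = 1 ∧ ∀ z ∈ ball (0 : ℂ) 1, φ z = c * moebius p z := by
  have hσ : LeftInvOn (moebius p) (moebius p) (ball 0 1) := fun z hz =>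
    moebius_moebius hp (mem_ball_zero_iff.1 hz)
  obtain ⟨c, hc, hφσ⟩ := exists_norm_eq_one_eq_mul_of_leftInvOn
    (hφd.comp (differentiableOn_moebius hp) (mapsTo_moebius hp))
    (hφm.comp (mapsTo_moebius hp)) ((differentiableOn_moebius hp).comp hψd hψm)
    ((mapsTo_moebius hp).comp hψm) (hσ.comp hψφ (mapsTo_moebius hp))
    (by simp [hφp])
  refine ⟨c, hc, fun z hz => ?_⟩
  simpa [hσ hz] using hφσ (moebius p z) (mapsTo_moebius hp hz)

lemma ofReal_sqrt_one_sub_norm_sq_mul_self {p : ℂ} (hp : ‖p‖ ≤ 1) :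
    ((√(1 - ‖p‖ ^ 2) : ℝ) : ℂ) * ((√(1 - ‖p‖ ^ 2) : ℝ) : ℂ) = 1 - p * conj p := by
  rw [← Complex.ofReal_mul, Real.mul_self_sqrt (by nlinarith [norm_nonneg p]), Complex.mul_conj']
  push_cast
  ring

/-- `W W* = 1` for `W f = u · (f ∘ φ)`, tested on the reproducing kernels `K_z`, `K_w` and with
denominators cleared. -/
def KernelIdentity (u φ : ℂ → ℂ) : Prop :=
  ∀ z ∈ ball (0 : ℂ) 1, ∀ w ∈ ball (0 : ℂ) 1,
    u z * conj (u w) * (1 - z * conj w) = 1 - φ z * conj (φ w)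

section KernelIdentity

variable {u φ : ℂ → ℂ}

lemma moebius_mul_conj_moebius_of_kernelIdentity (hφ : MapsTo φ (ball 0 1) (ball 0 1))
    (hK : KernelIdentity u φ) {z w : ℂ} (hz : z ∈ ball (0 : ℂ) 1) (hw : w ∈ ball (0 : ℂ) 1) :
    moebius (φ 0) (φ z) * conj (moebius (φ 0) (φ w)) = z * conj w := by
  have h0 : (0 : ℂ) ∈ ball 0 1 := mem_ball_self one_pos
  have ha : ‖φ 0‖ < 1 := mem_ball_zero_iff.1 (hφ h0)
  have h00 : u 0 * conj (u 0) = 1 - φ 0 * conj (φ 0) := by simpa using hK 0 h0 0 h0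
  have hz0 : 1 - conj (φ 0) * φ z = u z * conj (u 0) := by
    linear_combination -(by simpa using hK z hz 0 h0 : u z * conj (u 0) = 1 - φ z * conj (φ 0))
  have hw0 : 1 - φ 0 * conj (φ w) = conj (u w) * u 0 := by
    have := congrArg conj (hK w hw 0 h0)
    simp only [map_mul, map_sub, map_one, map_zero, mul_zero, sub_zero, mul_one,
      Complex.conj_conj] at this
    linear_combination -this
  have hφz := mem_ball_zero_iff.1 (hφ hz)
  have hφw := mem_ball_zero_iff.1 (hφ hw)
  have hne : u z * conj (u 0) * (conj (u w) * u 0) ≠ 0 := by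
    rw [← hz0, ← hw0]
    exact mul_ne_zero (one_sub_conj_mul_ne_zero ha hφz) (one_sub_mul_conj_ne_zero ha hφw)
  have key := one_sub_moebius_mul_conj_moebius (one_sub_conj_mul_ne_zero ha hφz)
    (one_sub_conj_mul_ne_zero ha hφw)
  rw [hz0, hw0, ← h00, ← hK z hz w hw, eq_div_iff hne] at key
  apply mul_right_cancel₀ hne
  linear_combination -key

lemma exists_eq_mul_moebius_of_kernelIdentity (hφ : MapsTo φ (ball 0 1) (ball 0 1))
    (hK : KernelIdentity u φ) :
    ∃ p c : ℂ, ‖p‖ < 1 ∧ ‖c‖ = 1 ∧ ∀ z ∈ ball (0 : ℂ) 1, φ z = c * moebius p z := by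
  have ha : ‖φ 0‖ < 1 := mem_ball_zero_iff.1 (hφ (mem_ball_self one_pos))
  have hhalf : (1 / 2 : ℂ) ∈ ball 0 1 := by rw [mem_ball_zero_iff]; norm_num
  obtain ⟨c, hc, hτ⟩ := exists_norm_eq_one_eq_mul_of_mul_conj_eq hhalf (by norm_num)
    fun z hz w hw => moebius_mul_conj_moebius_of_kernelIdentity hφ hK hz hw
  refine ⟨conj c * φ 0, c, by rwa [norm_mul, Complex.norm_conj, hc, one_mul], hc, fun z hz => ?_⟩
  rw [← moebius_mul_eq_mul_moebius hc, ← hτ z hz,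
    moebius_moebius ha (mem_ball_zero_iff.1 (hφ hz))]

lemma exists_eq_normalized_kernel_of_kernelIdentity (hK : KernelIdentity u φ) {p c : ℂ}
    (hp : ‖p‖ < 1) (hc : ‖c‖ = 1) (hφ : ∀ z ∈ ball (0 : ℂ) 1, φ z = c * moebius p z) :
    ∃ d : ℂ, ‖d‖ = 1 ∧
      ∀ z ∈ ball (0 : ℂ) 1, u z = d * (√(1 - ‖p‖ ^ 2) : ℝ) / (1 - conj p * z) := by
  have h0 : (0 : ℂ) ∈ ball 0 1 := mem_ball_self one_pos
  have hcc := conj_mul_self_of_norm_eq_one hc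
  have hφ0 : φ 0 = c * p := by simp [hφ 0 h0]
  set s : ℝ := √(1 - ‖p‖ ^ 2)
  have hs : 0 < s := Real.sqrt_pos.2 (by nlinarith [norm_nonneg p])
  have hss := ofReal_sqrt_one_sub_norm_sq_mul_self hp.le
  have h00 : u 0 * conj (u 0) = (s : ℂ) * conj (s : ℂ) := by
    have := hK 0 h0 0 h0
    simp only [hφ0, map_zero, mul_zero, sub_zero, mul_one, map_mul] at this
    rw [Complex.conj_ofReal, hss]
    linear_combination this - (p * conj p) * hcc
  have hu0 : ‖u 0‖ = s := by
    simpa [abs_of_pos hs] using norm_eq_norm_of_mul_conj_eq h00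
  have hu0' : conj (u 0) ≠ 0 := by
    rw [map_ne_zero, ← norm_ne_zero_iff, hu0]; exact hs.ne'
  refine ⟨u 0 / s, by rw [norm_div, hu0, Complex.norm_real, Real.norm_of_nonneg hs.le,
    div_self hs.ne'], fun z hz => ?_⟩
  have hDz := one_sub_conj_mul_ne_zero hp (mem_ball_zero_iff.1 hz)
  have hz0 := hK z hz 0 h0
  simp only [hφ z hz, hφ0, map_zero, mul_zero, sub_zero, mul_one, map_mul] at hz0
  have hm : (1 - conj p * moebius p z) * (1 - conj p * z) = 1 - p * conj p := by
    rw [one_sub_conj_mul_moebius hDz, div_mul_cancel₀ _ hDz]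
  rw [div_mul_cancel₀ _ (Complex.ofReal_ne_zero.2 hs.ne'), eq_div_iff hDz]
  apply mul_right_cancel₀ hu0'
  rw [Complex.conj_ofReal, hss] at h00
  linear_combination (1 - conj p * z) * hz0 - h00 + hm
    - (1 - conj p * z) * moebius p z * conj p * hcc

lemma kernelIdentity_of_eq_mul_moebius {p c d : ℂ} (hp : ‖p‖ < 1) (hc : ‖c‖ = 1) (hd : ‖d‖ = 1)
    (hφ : ∀ z ∈ ball (0 : ℂ) 1, φ z = c * moebius p z)
    (hu : ∀ z ∈ ball (0 : ℂ) 1, u z = d * (√(1 - ‖p‖ ^ 2) : ℝ) / (1 - conj p * z)) :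
    KernelIdentity u φ := by
  intro z hz w hw
  have hDz := one_sub_conj_mul_ne_zero hp (mem_ball_zero_iff.1 hz)
  have hDw := one_sub_conj_mul_ne_zero hp (mem_ball_zero_iff.1 hw)
  have hDw' := one_sub_mul_conj_ne_zero hp (mem_ball_zero_iff.1 hw)
  have key := one_sub_moebius_mul_conj_moebius hDz hDw
  have hss := ofReal_sqrt_one_sub_norm_sq_mul_self hp.le
  have hcc := conj_mul_self_of_norm_eq_one hc
  have hdd := conj_mul_self_of_norm_eq_one hd
  rw [hφ z hz, hφ w hw, hu z hz, hu w hw]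
  simp only [map_div₀, map_mul, map_sub, map_one, Complex.conj_ofReal, Complex.conj_conj]
  rw [eq_div_iff (mul_ne_zero hDz hDw'), ← hss] at key
  field_simp
  linear_combination (1 - conj p * z) * (1 - p * conj w) * moebius p z * conj (moebius p w) * hcc
    + (1 - z * conj w) * (√(1 - ‖p‖ ^ 2) : ℂ) * (√(1 - ‖p‖ ^ 2) : ℂ) * hdd - key

end KernelIdentity

namespace ContinuousLinearMap

variable {𝕜 E F : Type*} [RCLike 𝕜] [NormedAddCommGroup E] [InnerProductSpace 𝕜 E]
  [CompleteSpace E] [NormedAddCommGroup F] [InnerProductSpace 𝕜 F] [CompleteSpace F]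

lemma inner_map_map_and_surjective_iff (T : E →L[𝕜] F) :
    ((∀ x y : E, inner 𝕜 (T x) (T y) = inner 𝕜 x y) ∧ Function.Surjective T) ↔
      T ∘L adjoint T = 1 ∧ Function.Injective T := by
  rw [inner_map_map_iff_adjoint_comp_self]
  constructor
  · rintro ⟨hTT, hsurj⟩
    refine ⟨ext fun y => ?_, HasLeftInverse.injective ⟨adjoint T, fun x => ?_⟩⟩
    · obtain ⟨x, rfl⟩ := hsurj y
      simpa using congrArg T (DFunLike.congr_fun hTT x)
    · simpa using DFunLike.congr_fun hTT x
  · rintro ⟨hTT, hinj⟩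
    refine ⟨ext fun x => hinj ?_, fun y => ⟨adjoint T y, by simpa using DFunLike.congr_fun hTT y⟩⟩
    simpa using DFunLike.congr_fun hTT (T x)

lemma inner_sub_self_comp_adjoint (T : E →L[𝕜] F) (k y : F) :
    inner 𝕜 k (T (adjoint T y) - y) = inner 𝕜 (adjoint T k) (adjoint T y) - inner 𝕜 k y := by
  rw [inner_sub_right, adjoint_inner_left]

lemma self_comp_adjoint_eq_one_of_total {ι : Type*} {s : Set ι} {k : ι → F}
    (htot : ∀ y, (∀ i ∈ s, inner 𝕜 (k i) y = 0) → y = 0) (T : E →L[𝕜] F)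
    (hT : ∀ i ∈ s, ∀ j ∈ s, inner 𝕜 (adjoint T (k i)) (adjoint T (k j)) = inner 𝕜 (k i) (k j)) :
    T ∘L adjoint T = 1 := by
  have hk : ∀ j ∈ s, T (adjoint T (k j)) = k j := fun j hj => sub_eq_zero.1 <|
    htot _ fun i hi => by rw [inner_sub_self_comp_adjoint, hT i hi j hj, sub_self]
  refine ext fun y => sub_eq_zero.1 <| htot _ fun i hi => ?_
  rw [comp_apply, one_apply_eq_self, inner_sub_self_comp_adjoint, adjoint_inner_right, hk i hi,
    sub_self]

end ContinuousLinearMap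

lemma memℓp_conj_pow {z : ℂ} (hz : ‖z‖ < 1) : Memℓp (fun n : ℕ => conj z ^ n) 2 := by
  refine memℓp_gen ((summable_geometric_of_lt_one (sq_nonneg ‖z‖) ?_).congr fun n => ?_)
  · nlinarith [norm_nonneg z]
  · simp [← pow_mul, mul_comm]

/-- The reproducing kernel `K_z` of `H²`, as a coefficient sequence (`0` off the disc). -/
def hardyKernel (z : ℂ) : ell2 :=
  if h : ‖z‖ < 1 then ⟨fun n : ℕ => conj z ^ n, memℓp_conj_pow h⟩ else 0

lemma hardyKernel_apply {z : ℂ} (hz : ‖z‖ < 1) (n : ℕ) : hardyKernel z n = conj z ^ n := by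
  rw [hardyKernel, dif_pos hz]

lemma inner_hardyKernel_left {z : ℂ} (hz : ‖z‖ < 1) (a : ell2) :
    inner ℂ (hardyKernel z) a = hardyFun a z := by
  rw [lp.inner_eq_tsum, hardyFun]
  congr 1 with n
  simp [hardyKernel_apply hz, mul_comm]

lemma inner_hardyKernel_hardyKernel {z w : ℂ} (hz : ‖z‖ < 1) (hw : ‖w‖ < 1) :
    inner ℂ (hardyKernel z) (hardyKernel w) = (1 - z * conj w)⁻¹ := by
  rw [inner_hardyKernel_left hz, hardyFun,
    ← tsum_geometric_of_norm_lt_one (by simpa [norm_mul] using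
      mul_lt_one_of_nonneg_of_lt_one_left (norm_nonneg z) hz hw.le)]
  congr 1 with n
  rw [hardyKernel_apply hw, mul_pow, mul_comm]

lemma hardyFun_eq_sum_ofScalars (a : ell2) :
    hardyFun a = (FormalMultilinearSeries.ofScalars ℂ a).sum :=
  funext fun z => (FormalMultilinearSeries.ofScalars_sum_eq (E := ℂ) a z).symm

lemma one_le_radius_ofScalars (a : ell2) :
    1 ≤ (FormalMultilinearSeries.ofScalars ℂ a).radius := by
  refine ENNReal.coe_one ▸ FormalMultilinearSeries.le_radius_of_bound _ ‖a‖ fun n => ?_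
  simpa [FormalMultilinearSeries.ofScalars_norm] using lp.norm_apply_le_norm two_ne_zero a n

lemma eq_zero_of_hardyFun_eqOn_zero {a : ell2} (ha : ∀ z ∈ ball (0 : ℂ) 1, hardyFun a z = 0) :
    a = 0 := by
  have hps := ((FormalMultilinearSeries.ofScalars ℂ a).hasFPowerSeriesOnBall
    (one_pos.trans_le (one_le_radius_ofScalars a))).hasFPowerSeriesAt
  have h := hps.eq_zero_of_eventually <| Filter.eventually_of_mem (ball_mem_nhds 0 one_pos)
    fun z hz => by simpa [← hardyFun_eq_sum_ofScalars] using ha z hz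
  ext n
  simpa using congrFun ((FormalMultilinearSeries.ofScalars_series_eq_zero ℂ).1 h) n

lemma eq_zero_of_inner_hardyKernel_eq_zero {a : ell2}
    (ha : ∀ z ∈ ball (0 : ℂ) 1, inner ℂ (hardyKernel z) a = 0) : a = 0 :=
  eq_zero_of_hardyFun_eqOn_zero fun z hz =>
    (inner_hardyKernel_left (mem_ball_zero_iff.1 hz) a).symm.trans (ha z hz)

def IsWeightedCompositionOperator (W : ell2 →L[ℂ] ell2) (u φ : ℂ → ℂ) : Prop :=
  ∀ a : ell2, ∀ z ∈ ball (0 : ℂ) 1, hardyFun (W a) z = u z * hardyFun a (φ z)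

namespace IsWeightedCompositionOperator

variable {W : ell2 →L[ℂ] ell2} {u φ : ℂ → ℂ} (hW : IsWeightedCompositionOperator W u φ)
include hW

lemma adjoint_hardyKernel
    (hφ : MapsTo φ (ball 0 1) (ball 0 1)) {z : ℂ}
    (hz : z ∈ ball (0 : ℂ) 1) :
    adjoint W (hardyKernel z) = conj (u z) • hardyKernel (φ z) := by
  refine ext_inner_right ℂ fun a => ?_
  rw [adjoint_inner_left, inner_smul_left, Complex.conj_conj,
    inner_hardyKernel_left (mem_ball_zero_iff.1 hz), hW a z hz,
    inner_hardyKernel_left (mem_ball_zero_iff.1 (hφ hz))]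

lemma inner_adjoint_hardyKernel_eq_iff
    (hφ : MapsTo φ (ball 0 1) (ball 0 1)) {z w : ℂ}
    (hz : z ∈ ball (0 : ℂ) 1) (hw : w ∈ ball (0 : ℂ) 1) :
    inner ℂ (adjoint W (hardyKernel z)) (adjoint W (hardyKernel w)) =
        inner ℂ (hardyKernel z) (hardyKernel w) ↔
      u z * conj (u w) * (1 - z * conj w) = 1 - φ z * conj (φ w) := by
  have hz' := mem_ball_zero_iff.1 hz
  have hw' := mem_ball_zero_iff.1 hw
  have hφz := mem_ball_zero_iff.1 (hφ hz)
  have hφw := mem_ball_zero_iff.1 (hφ hw)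
  rw [hW.adjoint_hardyKernel hφ hz, hW.adjoint_hardyKernel hφ hw, inner_smul_left,
    inner_smul_right, Complex.conj_conj, inner_hardyKernel_hardyKernel hφz hφw,
    inner_hardyKernel_hardyKernel hz' hw', ← mul_assoc, ← div_eq_mul_inv, inv_eq_one_div,
    div_eq_div_iff (one_sub_mul_conj_ne_zero hφz hφw) (one_sub_mul_conj_ne_zero hz' hw'),
    one_mul]

lemma self_comp_adjoint_eq_one_iff
    (hφ : MapsTo φ (ball 0 1) (ball 0 1)) :
    W ∘L adjoint W = 1 ↔ KernelIdentity u φ := by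
  refine ⟨fun hWW z hz w hw => (hW.inner_adjoint_hardyKernel_eq_iff hφ hz hw).1 ?_,
    fun hK => self_comp_adjoint_eq_one_of_total (fun _ => eq_zero_of_inner_hardyKernel_eq_zero) W
      fun z hz w hw => (hW.inner_adjoint_hardyKernel_eq_iff hφ hz hw).2 (hK z hz w hw)⟩
  rw [adjoint_inner_right, ← comp_apply, hWW, one_apply_eq_self]

lemma injective
    (hu : ∀ z ∈ ball (0 : ℂ) 1, u z ≠ 0)
    (hφ : SurjOn φ (ball 0 1) (ball 0 1)) : Function.Injective W := by
  refine (injective_iff_map_eq_zero W).2 fun a ha => eq_zero_of_hardyFun_eqOn_zero fun ζ hζ => ?_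
  obtain ⟨z, hz, rfl⟩ := hφ hζ
  simpa [ha, hardyFun, hu z hz] using (hW a z hz).symm

end IsWeightedCompositionOperator

theorem weighted_composition_unitary_iff_general
    (φ : ℂ → ℂ) (u : ℂ → ℂ)
    (hφd : DifferentiableOn ℂ φ (ball (0 : ℂ) 1))
    (hφm : Set.MapsTo φ (ball (0 : ℂ) 1) (ball (0 : ℂ) 1))
    (W : ell2 →L[ℂ] ell2)
    (hW : ∀ a : ell2, ∀ z ∈ ball (0 : ℂ) 1, hardyFun (W a) z = u z * hardyFun a (φ z)) :
    ((∀ a b : ell2, (inner ℂ (W a) (W b) : ℂ) = inner ℂ a b) ∧ Function.Surjective W) ↔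
      ((∃ ψ : ℂ → ℂ, DifferentiableOn ℂ ψ (ball (0 : ℂ) 1) ∧
          Set.MapsTo ψ (ball (0 : ℂ) 1) (ball (0 : ℂ) 1) ∧
          (∀ z ∈ ball (0 : ℂ) 1, ψ (φ z) = z) ∧
          (∀ z ∈ ball (0 : ℂ) 1, φ (ψ z) = z)) ∧
       ∃ p : ℂ, ∃ c : ℂ, ‖p‖ < 1 ∧ φ p = 0 ∧ ‖c‖ = 1 ∧
         ∀ z ∈ ball (0 : ℂ) 1,
           u z = c * (Real.sqrt (1 - ‖p‖ ^ 2) : ℝ) / (1 - (starRingEnd ℂ) p * z)) := by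
  replace hW : IsWeightedCompositionOperator W u φ := hW
  rw [inner_map_map_and_surjective_iff, hW.self_comp_adjoint_eq_one_iff hφm]
  constructor
  · rintro ⟨hK, -⟩
    obtain ⟨p, c, hp, hc, hφ⟩ := exists_eq_mul_moebius_of_kernelIdentity hφm hK
    obtain ⟨d, hd, hu⟩ := exists_eq_normalized_kernel_of_kernelIdentity hK hp hc hφ
    exact ⟨exists_inverse_of_eq_mul_moebius hp hc hφ, p, d, hp,
      by simp [hφ p (mem_ball_zero_iff.2 hp)], hd, hu⟩
  · rintro ⟨⟨ψ, hψd, hψm, hψφ, hφψ⟩, p, c, hp, hφp, hc, hu⟩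
    obtain ⟨d, hd, hφ⟩ := exists_norm_eq_one_eq_mul_moebius_of_leftInvOn hφd hφm hψd hψm hψφ hp hφp
    refine ⟨kernelIdentity_of_eq_mul_moebius hp hd hc hφ hu, hW.injective (fun z hz => ?_)
      fun z hz => ⟨ψ z, hψm hz, hφψ z hz⟩⟩
    rw [hu z hz]
    exact div_ne_zero (mul_ne_zero (norm_ne_zero_iff.1 (by simp [hc]))
      (Complex.ofReal_ne_zero.2 (Real.sqrt_ne_zero'.2 (by nlinarith [norm_nonneg p]))))
      (one_sub_conj_mul_ne_zero hp (mem_ball_zero_iff.1 hz))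

theorem weighted_composition_unitary_iff
    (φ : ℂ → ℂ) (u : ℂ → ℂ)
    (hφd : DifferentiableOn ℂ φ (ball (0 : ℂ) 1))
    (hφm : Set.MapsTo φ (ball (0 : ℂ) 1) (ball (0 : ℂ) 1))
    (hud : DifferentiableOn ℂ u (ball (0 : ℂ) 1))
    (hu0 : ∃ z ∈ ball (0 : ℂ) 1, u z ≠ 0)
    (W : ell2 →L[ℂ] ell2)
    (hW : ∀ a : ell2, ∀ z ∈ ball (0 : ℂ) 1, hardyFun (W a) z = u z * hardyFun a (φ z)) :
    ((∀ a b : ell2, (inner ℂ (W a) (W b) : ℂ) = inner ℂ a b) ∧ Function.Surjective W) ↔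
      ((∃ ψ : ℂ → ℂ, DifferentiableOn ℂ ψ (ball (0 : ℂ) 1) ∧
          Set.MapsTo ψ (ball (0 : ℂ) 1) (ball (0 : ℂ) 1) ∧
          (∀ z ∈ ball (0 : ℂ) 1, ψ (φ z) = z) ∧
          (∀ z ∈ ball (0 : ℂ) 1, φ (ψ z) = z)) ∧
       ∃ p : ℂ, ∃ c : ℂ, ‖p‖ < 1 ∧ φ p = 0 ∧ ‖c‖ = 1 ∧
         ∀ z ∈ ball (0 : ℂ) 1,
           u z = c * (Real.sqrt (1 - ‖p‖ ^ 2) : ℝ) / (1 - (starRingEnd ℂ) p * z)) :=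
  weighted_composition_unitary_iff_general φ u hφd hφm W hW
end
end
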